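/- arXiv:1807.09118 — 3 statements merged into one kernel-verified Lean document; each statement's English description precedes it below -/
import Mathlib

section
/- For all a, b, c, d ∈ GF(q) with ad − bc ≠ 0, for every λ ∈ GF(q) and every vector v ∈ GF(q)^4, one has F_λ(M(a,b,c,d)·v) = (ad − bc)² · F_λ(v); consequently, every element of the group G maps the quadric Q_λ onto itself, i.e. G stabilizes each quadric of the pencil. -/
/-!
Common setting: `PG(3,q)` as the lattice of subspaces of `V = GF(q)⁴`;
the pencil of quadrics `Q_λ : x₁x₃ - x₂² + λx₄² = 0`, the plane `π : x₄ = 0`,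
the conic `C = Q_λ ∩ π`, and the group `G ≤ PGL(4,q)` induced by the matrices
`M(a,b,c,d)`.
-/

/-- The quadratic form `F_λ(x) = x₁x₃ - x₂² + λx₄²` on `V = F⁴`. -/
def Fq (F : Type) [Field F] (lam : F) (v : Fin 4 → F) : F :=
  v 0 * v 2 - v 1 ^ 2 + lam * v 3 ^ 2

/-- The matrix `M(a,b,c,d)`. -/
def Mmat (F : Type) [Field F] (a b c d : F) : Matrix (Fin 4) (Fin 4) F :=
  !![a^2, 2*a*c, c^2, 0;
     a*b, a*d + b*c, c*d, 0;
     b^2, 2*b*d, d^2, 0;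
     0,   0,       0,   a*d - b*c]

/-- A point of `PG(3,q)`: a 1-dimensional subspace of `F⁴`. -/
def isPoint (F : Type) [Field F] (P : Submodule F (Fin 4 → F)) : Prop :=
  Module.finrank F P = 1

/-- A line of `PG(3,q)`: a 2-dimensional subspace of `F⁴`. -/
def isLine (F : Type) [Field F] (l : Submodule F (Fin 4 → F)) : Prop :=
  Module.finrank F l = 2

/-- A plane of `PG(3,q)`: a 3-dimensional subspace of `F⁴`. -/
def isPlane (F : Type) [Field F] (s : Submodule F (Fin 4 → F)) : Prop :=
  Module.finrank F s = 3

/-- The quadric `Q_λ`, as the set of points on which `F_λ` vanishes. -/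
def quadric (F : Type) [Field F] (lam : F) : Set (Submodule F (Fin 4 → F)) :=
  {P | isPoint F P ∧ ∀ v ∈ P, Fq F lam v = 0}

/-- The plane `π : x₄ = 0`. -/
def planePi (F : Type) [Field F] : Submodule F (Fin 4 → F) where
  carrier := {v | v 3 = 0}
  add_mem' := by
    intro a b ha hb
    simp only [Set.mem_setOf_eq, Pi.add_apply] at *
    rw [ha, hb, add_zero]
  zero_mem' := by simp
  smul_mem' := by
    intro c a ha
    simp only [Set.mem_setOf_eq, Pi.smul_apply, smul_eq_mul] at *
    rw [ha, mul_zero]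

/-- The point `U₄ = ⟨(0,0,0,1)⟩`. -/
def pointU4 (F : Type) [Field F] : Submodule F (Fin 4 → F) :=
  Submodule.span F {(Pi.single 3 1 : Fin 4 → F)}

/-- The conic `C = Q_λ ∩ π` (independent of `λ`). -/
def conicC (F : Type) [Field F] : Set (Submodule F (Fin 4 → F)) :=
  {P | P ∈ quadric F 0 ∧ P ≤ planePi F}

/-- The set of points of the quadric `Q_λ` lying on a subspace `l`. -/
def qpts (F : Type) [Field F] (lam : F) (l : Submodule F (Fin 4 → F)) :
    Set (Submodule F (Fin 4 → F)) :=
  {P | P ∈ quadric F lam ∧ P ≤ l}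

/-- A line is tangent to `Q_λ` if it contains exactly one of its points. -/
def tangentTo (F : Type) [Field F] (l : Submodule F (Fin 4 → F)) (lam : F) : Prop :=
  (qpts F lam l).ncard = 1

/-- A line is secant to `Q_λ` if it contains exactly two of its points. -/
def secantTo (F : Type) [Field F] (l : Submodule F (Fin 4 → F)) (lam : F) : Prop :=
  (qpts F lam l).ncard = 2

/-- A line is external to `Q_λ` if it contains none of its points. -/
def externalTo (F : Type) [Field F] (l : Submodule F (Fin 4 → F)) (lam : F) : Prop :=
  (qpts F lam l).ncard = 0

/-- `L₁`: lines of `π` tangent to `C`. -/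
def lineL1 (F : Type) [Field F] : Set (Submodule F (Fin 4 → F)) :=
  {l | isLine F l ∧ l ≤ planePi F ∧ ({P | P ∈ conicC F ∧ P ≤ l}).ncard = 1}

/-- `L₂`: lines of `π` external to `C`. -/
def lineL2 (F : Type) [Field F] : Set (Submodule F (Fin 4 → F)) :=
  {l | isLine F l ∧ l ≤ planePi F ∧ ({P | P ∈ conicC F ∧ P ≤ l}).ncard = 0}

/-- `L₃`: lines of `π` secant to `C`. -/
def lineL3 (F : Type) [Field F] : Set (Submodule F (Fin 4 → F)) :=
  {l | isLine F l ∧ l ≤ planePi F ∧ ({P | P ∈ conicC F ∧ P ≤ l}).ncard = 2}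

/-- `E`: the external points of `C` in `π` (on exactly two tangent lines of `C`). -/
def setE (F : Type) [Field F] : Set (Submodule F (Fin 4 → F)) :=
  {P | isPoint F P ∧ P ≤ planePi F ∧ P ∉ conicC F ∧
    ({m | m ∈ lineL1 F ∧ P ≤ m}).ncard = 2}

/-- `I`: the internal points of `C` in `π` (on no tangent line of `C`). -/
def setI (F : Type) [Field F] : Set (Submodule F (Fin 4 → F)) :=
  {P | isPoint F P ∧ P ≤ planePi F ∧ P ∉ conicC F ∧
    ({m | m ∈ lineL1 F ∧ P ≤ m}).ncard = 0}

/-- `L₁'`: the lines through `U₄` contained in the cone `Q₀`. -/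
def lineL1' (F : Type) [Field F] : Set (Submodule F (Fin 4 → F)) :=
  {l | isLine F l ∧ pointU4 F ≤ l ∧ ∀ v ∈ l, Fq F 0 v = 0}

/-- `L₂'`: the lines through `U₄` meeting `π` in a point of `I`. -/
def lineL2' (F : Type) [Field F] : Set (Submodule F (Fin 4 → F)) :=
  {l | isLine F l ∧ pointU4 F ≤ l ∧ (l ⊓ planePi F) ∈ setI F}

/-- `L₃'`: the lines through `U₄` meeting `π` in a point of `E`. -/
def lineL3' (F : Type) [Field F] : Set (Submodule F (Fin 4 → F)) :=
  {l | isLine F l ∧ pointU4 F ≤ l ∧ (l ⊓ planePi F) ∈ setE F}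

/-- `L₄`: the lines not through `U₄`, tangent to the cone `Q₀`, meeting `π` in a
point of `E`. -/
def lineL4 (F : Type) [Field F] : Set (Submodule F (Fin 4 → F)) :=
  {l | isLine F l ∧ ¬ pointU4 F ≤ l ∧ tangentTo F l 0 ∧ (l ⊓ planePi F) ∈ setE F}

/-- `L₄'`: the lines meeting `π` in exactly one point, lying on `C`, and secant to
every quadric `Q_λ`. -/
def lineL4' (F : Type) [Field F] : Set (Submodule F (Fin 4 → F)) :=
  {l | isLine F l ∧ (l ⊓ planePi F) ∈ conicC F ∧ ∀ lam : F, secantTo F l lam}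

/-- The collineations of `PG(3,q)` induced by the matrices `M(a,b,c,d)`,
`ad - bc ≠ 0`, acting on subspaces. -/
def Gcoll (F : Type) [Field F] : Set (Equiv.Perm (Submodule F (Fin 4 → F))) :=
  {σ | ∃ a b c d : F, a * d - b * c ≠ 0 ∧
    ∃ e : (Fin 4 → F) ≃ₗ[F] (Fin 4 → F),
      (∀ v, e v = (Mmat F a b c d).mulVec v) ∧
      ∀ W : Submodule F (Fin 4 → F), σ W = W.map e.toLinearMap}

/-- The group `G ≃ PGL(2,q)`, as a group of collineations of `PG(3,q)`. -/
def G (F : Type) [Field F] : Subgroup (Equiv.Perm (Submodule F (Fin 4 → F))) :=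
  Subgroup.closure (Gcoll F)

/-- `A = L₁' ∪ L₂' ∪ L₃ ∪ L₄'`. -/
def setA (F : Type) [Field F] : Set (Submodule F (Fin 4 → F)) :=
  lineL1' F ∪ lineL2' F ∪ lineL3 F ∪ lineL4' F

/-- `B = L₁ ∪ L₂ ∪ L₃' ∪ L₄`. -/
def setB (F : Type) [Field F] : Set (Submodule F (Fin 4 → F)) :=
  lineL1 F ∪ lineL2 F ∪ lineL3' F ∪ lineL4 F

/-- `S_ℓ`: the lines of `S` meeting the line `ℓ` (in at least a point). -/
def linesMeeting (F : Type) [Field F] (S : Set (Submodule F (Fin 4 → F)))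
    (l : Submodule F (Fin 4 → F)) : Set (Submodule F (Fin 4 → F)) :=
  {r | r ∈ S ∧ r ⊓ l ≠ ⊥}

/-- A spread of `PG(3,q)`: `q² + 1` pairwise disjoint lines. -/
def isSpread (F : Type) [Field F] (q : ℕ) (S : Set (Submodule F (Fin 4 → F))) : Prop :=
  (∀ l ∈ S, isLine F l) ∧ S.ncard = q ^ 2 + 1 ∧
    ∀ l ∈ S, ∀ l' ∈ S, l ≠ l' → l ⊓ l' = ⊥

/-- A Cameron–Liebler line class with parameter `x`: a set of lines meeting every
spread in exactly `x` lines. -/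
def isCameronLiebler (F : Type) [Field F] (q x : ℕ)
    (L : Set (Submodule F (Fin 4 → F))) : Prop :=
  (∀ l ∈ L, isLine F l) ∧ ∀ S, isSpread F q S → (L ∩ S).ncard = x

/-- `O_n`: the points off `Q_λ` at which `F_λ` evaluates to a nonsquare. -/
def setOn (F : Type) [Field F] (lam : F) : Set (Submodule F (Fin 4 → F)) :=
  {P | isPoint F P ∧ ∀ v ∈ P, v ≠ 0 → ¬ IsSquare (Fq F lam v)}

/-- `O_s`: the points off `Q_λ` at which `F_λ` evaluates to a nonzero square. -/
def setOs (F : Type) [Field F] (lam : F) : Set (Submodule F (Fin 4 → F)) :=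
  {P | isPoint F P ∧ ∀ v ∈ P, v ≠ 0 → Fq F lam v ≠ 0 ∧ IsSquare (Fq F lam v)}

/-- `T`: the tangent lines to `Q_λ` all of whose points off `Q_λ` lie in `O_n`. -/
def setT (F : Type) [Field F] (lam : F) : Set (Submodule F (Fin 4 → F)) :=
  {l | isLine F l ∧ tangentTo F l lam ∧
    ∀ P, isPoint F P → P ≤ l → P ∉ quadric F lam → P ∈ setOn F lam}

/-- `S`: the secant lines to `Q_λ`. -/
def setS (F : Type) [Field F] (lam : F) : Set (Submodule F (Fin 4 → F)) :=
  {l | isLine F l ∧ secantTo F l lam}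

/-- The symmetric bilinear form obtained by polarizing `F_λ`. -/
def polarFq (F : Type) [Field F] (lam : F) (u v : Fin 4 → F) : F :=
  Fq F lam (u + v) - Fq F lam u - Fq F lam v

theorem polarFq_eq (F : Type) [Field F] (lam : F) (u v : Fin 4 → F) :
    polarFq F lam u v =
      u 0 * v 2 + u 2 * v 0 - 2 * (u 1 * v 1) + lam * (2 * (u 3 * v 3)) := by
  simp only [polarFq, Fq, Pi.add_apply]
  ring

/-- `W^{⊥_λ}`: the orthogonal complement of a subspace `W` with respect to the
symmetric bilinear form obtained by polarizing `F_λ`. -/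
def perpLam (F : Type) [Field F] (lam : F) (W : Submodule F (Fin 4 → F)) :
    Submodule F (Fin 4 → F) where
  carrier := {v | ∀ u ∈ W, polarFq F lam u v = 0}
  add_mem' := by
    intro x y hx hy u hu
    have h1 := hx u hu
    have h2 := hy u hu
    rw [polarFq_eq] at h1 h2 ⊢
    simp only [Pi.add_apply]
    linear_combination h1 + h2
  zero_mem' := by
    intro u hu
    rw [polarFq_eq]
    simp
  smul_mem' := by
    intro c x hx u hu
    have h1 := hx u hu
    rw [polarFq_eq] at h1 ⊢
    simp only [Pi.smul_apply, smul_eq_mul]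
    linear_combination c * h1

open scoped Pointwise

theorem Fq_mulVec_Mmat {F : Type} [Field F] (a b c d lam : F) (v : Fin 4 → F) :
    Fq F lam ((Mmat F a b c d).mulVec v) = (a * d - b * c) ^ 2 * Fq F lam v := by
  simp only [Fq, Mmat, Matrix.mulVec, dotProduct, Fin.sum_univ_four, Matrix.of_apply,
    Matrix.cons_val', Matrix.cons_val_zero, Matrix.cons_val_one, Matrix.cons_val_two,
    Matrix.cons_val_three, Matrix.head_cons, Matrix.tail_cons]
  ring

theorem map_mem_quadric_iff {F : Type} [Field F] {lam k : F} (hk : k ≠ 0)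
    (e : (Fin 4 → F) ≃ₗ[F] (Fin 4 → F)) (he : ∀ v, Fq F lam (e v) = k * Fq F lam v)
    (W : Submodule F (Fin 4 → F)) :
    W.map e.toLinearMap ∈ quadric F lam ↔ W ∈ quadric F lam := by
  simp only [quadric, isPoint, Set.mem_ofPred_eq, LinearEquiv.finrank_map_eq,
    Submodule.mem_map, forall_exists_index, and_imp, forall_apply_eq_imp_iff₂,
    LinearEquiv.coe_coe, he, mul_eq_zero, hk, false_or]

theorem Gcoll_subset_stabilizer_quadric {F : Type} [Field F] (lam : F) :
    Gcoll F ⊆ MulAction.stabilizer (Equiv.Perm (Submodule F (Fin 4 → F))) (quadric F lam) := by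
  rintro σ ⟨a, b, c, d, hdet, e, he, hσ⟩
  have hmem : ∀ W, σ W ∈ quadric F lam ↔ W ∈ quadric F lam := fun W => by
    rw [hσ]
    exact map_mem_quadric_iff (pow_ne_zero 2 hdet) e
      (fun v => by rw [he, Fq_mulVec_Mmat]) W
  have hpre : σ ⁻¹' quadric F lam = quadric F lam := Set.ext hmem
  rw [SetLike.mem_coe, MulAction.mem_stabilizer_iff, ← Set.image_smul]
  nth_rw 1 [← hpre]
  exact Set.image_preimage_eq _ σ.surjective

theorem statement_0_general {F : Type} [Field F] :
    (∀ a b c d : F, a * d - b * c ≠ 0 →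
      ∀ (lam : F) (v : Fin 4 → F),
        Fq F lam ((Mmat F a b c d).mulVec v) = (a * d - b * c) ^ 2 * Fq F lam v) ∧
    (∀ lam : F, ∀ g ∈ G F, (fun P => g • P) '' quadric F lam = quadric F lam) := by
  refine ⟨fun a b c d _ lam v => Fq_mulVec_Mmat a b c d lam v, fun lam g hg => ?_⟩
  have hG : G F ≤ MulAction.stabilizer (Equiv.Perm (Submodule F (Fin 4 → F))) (quadric F lam) :=
    (Subgroup.closure_le _).mpr (Gcoll_subset_stabilizer_quadric lam)
  rw [Set.image_smul]
  exact hG hg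

theorem statement_0 {F : Type} [Field F] [Fintype F] (q : ℕ)
    (hq : Fintype.card F = q) (hodd : Odd q) :
    (∀ a b c d : F, a * d - b * c ≠ 0 →
      ∀ (lam : F) (v : Fin 4 → F),
        Fq F lam ((Mmat F a b c d).mulVec v) = (a * d - b * c) ^ 2 * Fq F lam v) ∧
    (∀ lam : F, ∀ g ∈ G F, (fun P => g • P) '' quadric F lam = quadric F lam) :=
  statement_0_general
end

section
/- The group G acts transitively on the set of points of Q₀ not in C ∪ {U₄}; this set has exactly q² − 1 points, and the stabilizer in G of any of its points has order q. -/
/-! `A = !![a, c; b, d] ↦ M(a,b,c,d)` is multiplicative, so `G` is the image of a homomorphism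
`GL(2,q) → PGL(4,q)`. The points of `Q₀` off `C ∪ {U₄}` are the `⟨c • p + U₄⟩` with `p` on `C`
and `c ≠ 0`: there are `(q - 1)(q + 1)` of them. The image of `A` sends `⟨(1,0,0,1)⟩` to
`⟨(a², ab, b², det A)⟩`, which reaches each of these points, and it fixes `⟨(1,0,0,1)⟩` exactly
when `A` is a scalar multiple of `!![1, t; 0, 1]`; so the stabilizer is `{M(1,0,t,1)}`. -/

section Collineation
variable {F : Type} [Field F]

open Matrix

/-- On the first three coordinates, `toMmat A` is `S ↦ A * S * Aᵀ` on symmetric matrices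
`S = !![x₁, x₂; x₂, x₃]`; this is why `A ↦ toMmat A` is multiplicative. -/
def toMmat (A : Matrix (Fin 2) (Fin 2) F) : Matrix (Fin 4) (Fin 4) F :=
  Mmat F (A 0 0) (A 1 0) (A 0 1) (A 1 1)

lemma toMmat_of (a b c d : F) : toMmat !![a, c; b, d] = Mmat F a b c d := rfl

lemma toMmat_one : toMmat (1 : Matrix (Fin 2) (Fin 2) F) = 1 := by
  ext i j
  fin_cases i <;> fin_cases j <;> simp [toMmat, Mmat, one_apply]

lemma toMmat_mul (A B : Matrix (Fin 2) (Fin 2) F) :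
    toMmat (A * B) = toMmat A * toMmat B := by
  ext i j
  fin_cases i <;> fin_cases j <;>
    simp [toMmat, Mmat, mul_apply, Fin.sum_univ_two, Fin.sum_univ_four] <;> ring

lemma toMmat_smul (k : F) (A : Matrix (Fin 2) (Fin 2) F) :
    toMmat (k • A) = k ^ 2 • toMmat A := by
  ext i j
  fin_cases i <;> fin_cases j <;> simp [toMmat, Mmat] <;> ring

lemma toMmat_mulVec_one_zero_zero_one (A : Matrix (Fin 2) (Fin 2) F) :
    toMmat A *ᵥ ![1, 0, 0, 1] = ![A 0 0 ^ 2, A 0 0 * A 1 0, A 1 0 ^ 2, A.det] := by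
  ext i
  fin_cases i <;> simp [toMmat, Mmat, mulVec, dotProduct, Fin.sum_univ_four, det_fin_two]
  ring

def toMmatHom : Matrix (Fin 2) (Fin 2) F →* Matrix (Fin 4) (Fin 4) F where
  toFun := toMmat
  map_one' := toMmat_one
  map_mul' := toMmat_mul

open scoped Pointwise in
noncomputable def collineation : GL (Fin 2) F →* Equiv.Perm (Submodule F (Fin 4 → F)) :=
  (MulAction.toPermHom _ _).comp
    (GeneralLinearGroup.toLin.toMonoidHom.comp (Units.map toMmatHom))

lemma collineation_apply (A : GL (Fin 2) F) (W : Submodule F (Fin 4 → F)) :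
    collineation A W = W.map (toMmat (A : Matrix (Fin 2) (Fin 2) F)).mulVecLin := rfl

lemma collineation_smul_span (A : GL (Fin 2) F) (v : Fin 4 → F) :
    collineation A • (F ∙ v) = F ∙ (toMmat (A : Matrix (Fin 2) (Fin 2) F) *ᵥ v) := by
  rw [Equiv.Perm.smul_def, collineation_apply, Submodule.map_span, Set.image_singleton,
    mulVecLin_apply]

lemma collineation_eq_of_val_eq_smul {A B : GL (Fin 2) F} {k : F} (hk : k ≠ 0)
    (h : (A : Matrix (Fin 2) (Fin 2) F) = k • (B : Matrix (Fin 2) (Fin 2) F)) :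
    collineation A = collineation B := by
  ext1 W
  have hlin : (k ^ 2 • toMmat (B : Matrix (Fin 2) (Fin 2) F)).mulVecLin =
      k ^ 2 • (toMmat (B : Matrix (Fin 2) (Fin 2) F)).mulVecLin :=
    LinearMap.ext fun v => smul_mulVec _ _ v
  rw [collineation_apply, collineation_apply, h, toMmat_smul, hlin,
    Submodule.map_smul _ _ _ (pow_ne_zero 2 hk)]

lemma Gcoll_eq_range : Gcoll F = Set.range (collineation (F := F)) := by
  ext σ
  constructor
  · rintro ⟨a, b, c, d, hdet, e, he, hσ⟩
    have hA : (!![a, c; b, d] : Matrix (Fin 2) (Fin 2) F).det ≠ 0 := by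
      rwa [det_fin_two_of, mul_comm c]
    refine ⟨GeneralLinearGroup.mkOfDetNeZero _ hA, Equiv.ext fun W => ?_⟩
    rw [hσ, collineation_apply, GeneralLinearGroup.val_mkOfDetNeZero, toMmat_of]
    congr 1
    exact LinearMap.ext fun v => (he v).symm
  · rintro ⟨A, rfl⟩
    have hA : A 0 0 * A 1 1 - A 1 0 * A 0 1 ≠ 0 := by
      rw [mul_comm (A 1 0), ← det_fin_two]
      exact A.isUnit.map detMonoidHom |>.ne_zero
    exact ⟨A 0 0, A 1 0, A 0 1, A 1 1, hA,
      (GeneralLinearGroup.toLin (Units.map toMmatHom A)).toLinearEquiv, fun v => rfl, fun W => rfl⟩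

lemma G_eq_range : G F = (collineation (F := F)).range := by
  rw [G, Gcoll_eq_range, ← MonoidHom.coe_range, Subgroup.closure_eq]

lemma collineation_mem_G (A : GL (Fin 2) F) : collineation A ∈ G F := by
  rw [G_eq_range]
  exact ⟨A, rfl⟩

end Collineation

section Points
variable {F : Type} [Field F]

lemma exists_eq_span_of_isPoint {P : Submodule F (Fin 4 → F)} (hP : isPoint F P) :
    ∃ v ≠ 0, P = F ∙ v := by
  have hne : P ≠ ⊥ := fun h => by
    rw [isPoint, h, finrank_bot] at hP
    exact zero_ne_one hP
  obtain ⟨v, hvP, hv⟩ := Submodule.exists_mem_ne_zero_of_ne_bot hne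
  exact ⟨v, hv, eq_span_singleton_of_mem_of_finrank_eq_one hP hvP hv⟩

lemma eq_of_span_singleton_eq {ι : Type*} {v w : ι → F} {i : ι} (hv : v i = 1) (hw : w i = 1)
    (h : F ∙ v = F ∙ w) : v = w := by
  obtain ⟨z, rfl⟩ := Submodule.span_singleton_eq_span_singleton.mp h
  have hz : (z : F) = 1 := by simpa [Units.smul_def, hv] using hw
  rw [Units.smul_def, hz, one_smul]

lemma span_singleton_le_planePi_iff {v : Fin 4 → F} : F ∙ v ≤ planePi F ↔ v 3 = 0 :=
  Submodule.span_singleton_le_iff_mem _ _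

lemma Fq_smul (lam k : F) (v : Fin 4 → F) : Fq F lam (k • v) = k ^ 2 * Fq F lam v := by
  simp only [Fq, Pi.smul_apply, smul_eq_mul]
  ring

lemma span_singleton_mem_quadric_iff {lam : F} {v : Fin 4 → F} (hv : v ≠ 0) :
    F ∙ v ∈ quadric F lam ↔ Fq F lam v = 0 := by
  refine ⟨fun h => h.2 v (Submodule.mem_span_singleton_self v), fun h => ?_⟩
  refine ⟨finrank_span_singleton hv, fun u hu => ?_⟩
  obtain ⟨k, rfl⟩ := Submodule.mem_span_singleton.mp hu
  rw [Fq_smul, h, mul_zero]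

lemma Fq_zero_eq_zero_iff {v : Fin 4 → F} : Fq F 0 v = 0 ↔ v 0 * v 2 = v 1 ^ 2 := by
  simp [Fq, sub_eq_zero]

def coneMinusBase (F : Type) [Field F] : Set (Submodule F (Fin 4 → F)) :=
  quadric F 0 \ (conicC F ∪ {pointU4 F})

lemma mem_coneMinusBase_iff {P : Submodule F (Fin 4 → F)} :
    P ∈ coneMinusBase F ↔
      ∃ v : Fin 4 → F, v 3 = 1 ∧ v 0 * v 2 = v 1 ^ 2 ∧ v ≠ Pi.single 3 1 ∧ P = F ∙ v := by
  constructor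
  · rintro ⟨hQ, hCU⟩
    obtain ⟨w, hw, rfl⟩ := exists_eq_span_of_isPoint hQ.1
    have hw3 : w 3 ≠ 0 := fun h => hCU (Or.inl ⟨hQ, span_singleton_le_planePi_iff.mpr h⟩)
    have hspan : F ∙ (w 3)⁻¹ • w = F ∙ w :=
      Submodule.span_singleton_smul_eq (IsUnit.mk0 _ (inv_ne_zero hw3)) w
    refine ⟨(w 3)⁻¹ • w, by simp [hw3], ?_, fun h => hCU (Or.inr ?_), hspan.symm⟩
    · rw [← Fq_zero_eq_zero_iff, ← span_singleton_mem_quadric_iff (by simp [hw3, hw]), hspan]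
      exact hQ
    · rw [← hspan, h]
      rfl
  · rintro ⟨v, hv3, hv, hvU, rfl⟩
    have hv0 : v ≠ 0 := fun h => by simp [h] at hv3
    refine ⟨(span_singleton_mem_quadric_iff hv0).mpr (Fq_zero_eq_zero_iff.mpr hv), ?_⟩
    rintro (⟨-, hle⟩ | hU)
    · exact one_ne_zero (hv3 ▸ span_singleton_le_planePi_iff.mp hle)
    · exact hvU (eq_of_span_singleton_eq hv3 (by simp) hU)

lemma cone_apply_eq_zero_of_apply_zero_eq_zero {v : Fin 4 → F} (hv3 : v 3 = 1)
    (hv : v 0 * v 2 = v 1 ^ 2) (hvU : v ≠ Pi.single 3 1) (h0 : v 0 = 0) : v 1 = 0 ∧ v 2 ≠ 0 := by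
  have h1 : v 1 = 0 := pow_eq_zero_iff two_ne_zero |>.mp (by rw [← hv, h0, zero_mul])
  refine ⟨h1, fun h2 => hvU ?_⟩
  ext i; fin_cases i <;> simp [h0, h1, h2, hv3]

end Points

section Count
variable {F : Type} [Field F]

/-- `c • p + U₄` for `p` on the conic `C`, parametrized by `(1, t, t²)` and `(0, 0, 1)`. -/
def coneVec (c : F) : Option F → Fin 4 → F
  | some t => ![c, c * t, c * t ^ 2, 1]
  | none => ![0, 0, c, 1]

lemma injective_span_coneVec :
    Function.Injective fun p : Fˣ × Option F => F ∙ coneVec (p.1 : F) p.2 := by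
  rintro ⟨c, o⟩ ⟨c', o'⟩ h
  have hv := eq_of_span_singleton_eq (i := 3) (by cases o <;> rfl) (by cases o' <;> rfl) h
  have h0 := congrFun hv 0
  have h1 := congrFun hv 1
  have h2 := congrFun hv 2
  rcases o with _ | t <;> rcases o' with _ | t' <;>
    simp only [coneVec, Matrix.cons_val_zero, Matrix.cons_val_one, Matrix.cons_val] at h0 h1 h2
  · exact Prod.ext (Units.ext h2) rfl
  · exact absurd h0.symm c'.ne_zero
  · exact absurd h0 c.ne_zero
  · obtain rfl := Units.ext h0
    obtain rfl := mul_left_cancel₀ c.ne_zero h1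
    rfl

lemma range_span_coneVec :
    Set.range (fun p : Fˣ × Option F => F ∙ coneVec (p.1 : F) p.2) = coneMinusBase F := by
  ext P
  rw [mem_coneMinusBase_iff]
  constructor
  · rintro ⟨⟨c, o⟩, rfl⟩
    refine ⟨coneVec c o, by cases o <;> rfl, ?_, fun h => c.ne_zero ?_, rfl⟩
    · cases o <;>
        simp only [coneVec, Matrix.cons_val_zero, Matrix.cons_val_one, Matrix.cons_val] <;> ring
    · cases o
      · simpa [coneVec] using congrFun h 2
      · simpa [coneVec] using congrFun h 0
  · rintro ⟨v, hv3, hv, hvU, rfl⟩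
    by_cases h0 : v 0 = 0
    · obtain ⟨h1, h2⟩ := cone_apply_eq_zero_of_apply_zero_eq_zero hv3 hv hvU h0
      refine ⟨(Units.mk0 (v 2) h2, none), congrArg (fun w => F ∙ w) ?_⟩
      ext i; fin_cases i <;> simp [coneVec, h0, h1, hv3]
    · have h1 : v 0 * (v 1 / v 0) = v 1 := mul_div_cancel₀ _ h0
      have h2 : v 0 * (v 1 / v 0) ^ 2 = v 2 := by
        field_simp
        linear_combination -hv
      refine ⟨(Units.mk0 (v 0) h0, some (v 1 / v 0)), congrArg (fun w => F ∙ w) ?_⟩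
      ext i; fin_cases i <;> simp [coneVec, hv3, h1, h2]

lemma ncard_coneMinusBase [Fintype F] : (coneMinusBase F).ncard = Fintype.card F ^ 2 - 1 := by
  rw [← range_span_coneVec, Set.ncard_range_of_injective injective_span_coneVec,
    Nat.card_prod, Nat.card_units, Finite.card_option, Nat.card_eq_fintype_card, mul_comm,
    ← Nat.sq_sub_sq, one_pow]

end Count

section Orbit
variable {F : Type} [Field F]

open Matrix GeneralLinearGroup

def basePoint (F : Type) [Field F] : Submodule F (Fin 4 → F) :=
  F ∙ ![1, 0, 0, 1]

lemma collineation_smul_basePoint (A : GL (Fin 2) F) :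
    collineation A • basePoint F =
      F ∙ ![A 0 0 ^ 2, A 0 0 * A 1 0, A 1 0 ^ 2, (A : Matrix (Fin 2) (Fin 2) F).det] := by
  rw [basePoint, collineation_smul_span, toMmat_mulVec_one_zero_zero_one]

lemma exists_collineation_smul_basePoint {v : Fin 4 → F} (hv3 : v 3 = 1)
    (hv : v 0 * v 2 = v 1 ^ 2) (hvU : v ≠ Pi.single 3 1) :
    ∃ A : GL (Fin 2) F, collineation A • basePoint F = F ∙ v := by
  by_cases h0 : v 0 = 0
  · obtain ⟨h1, h2⟩ := cone_apply_eq_zero_of_apply_zero_eq_zero hv3 hv hvU h0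
    refine ⟨mkOfDetNeZero !![0, -1; v 2, 0] (by simpa [det_fin_two_of] using h2), ?_⟩
    rw [collineation_smul_basePoint, ← Submodule.span_singleton_smul_eq (IsUnit.mk0 _ h2) v]
    congr 2
    ext i; fin_cases i <;> simp [det_fin_two_of, h0, h1, hv3, sq]
  · refine ⟨mkOfDetNeZero !![v 0, 0; v 1, 1] (by simpa [det_fin_two_of] using h0), ?_⟩
    rw [collineation_smul_basePoint, ← Submodule.span_singleton_smul_eq (IsUnit.mk0 _ h0) v]
    congr 2
    ext i; fin_cases i <;> simp [det_fin_two_of, hv3, sq, ← hv]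

lemma coneMinusBase_subset_orbit :
    coneMinusBase F ⊆ MulAction.orbit (G F) (basePoint F) := by
  intro P hP
  obtain ⟨v, hv3, hv, hvU, rfl⟩ := mem_coneMinusBase_iff.mp hP
  obtain ⟨A, hA⟩ := exists_collineation_smul_basePoint hv3 hv hvU
  exact ⟨⟨collineation A, collineation_mem_G A⟩, hA⟩

end Orbit

section Stabilizer
variable {F : Type} [Field F]

open Matrix GeneralLinearGroup

lemma collineation_upperRightHom_smul_basePoint (t : F) :
    collineation (upperRightHom t) • basePoint F = basePoint F := by
  rw [collineation_smul_basePoint]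
  simp [basePoint, det_fin_two_of]

lemma injective_collineation_upperRightHom :
    Function.Injective fun t : F => collineation (upperRightHom t) := by
  intro t t' h
  have hsmul : ∀ s : F, collineation (upperRightHom s) • (F ∙ ![0, 0, 1, 0]) =
      F ∙ ![s ^ 2, s, 1, 0] := fun s => by
    rw [collineation_smul_span]
    congr 2
    ext i; fin_cases i <;> simp [toMmat, Mmat, mulVec, dotProduct, Fin.sum_univ_four]
  have h' := hsmul t
  rw [show collineation (upperRightHom t) = collineation (upperRightHom t') from h, hsmul t'] at h'
  simpa using (congrFun (eq_of_span_singleton_eq (i := 2) (by simp) (by simp) h') 1).symm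

lemma collineation_eq_upperRightHom {A : GL (Fin 2) F}
    (h : collineation A • basePoint F = basePoint F) :
    collineation A = collineation (upperRightHom (A 0 1 / A 0 0)) := by
  rw [collineation_smul_basePoint, basePoint] at h
  obtain ⟨z, hz⟩ := Submodule.span_singleton_eq_span_singleton.mp h
  have h0 : (z : F) * A 0 0 ^ 2 = 1 := by simpa [Units.smul_def] using congrFun hz 0
  have hb : A 1 0 = 0 := by simpa [Units.smul_def] using congrFun hz 2
  have h3 : (z : F) * (A 0 0 * A 1 1 - A 0 1 * A 1 0) = 1 := by
    simpa [Units.smul_def, det_fin_two] using congrFun hz 3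
  have ha : A 0 0 ≠ 0 := fun ha => by simp [ha] at h0
  have hd : A 1 1 = A 0 0 := by
    apply mul_left_cancel₀ (mul_ne_zero z.ne_zero ha)
    linear_combination h3 - h0 + (z : F) * A 0 1 * hb
  apply collineation_eq_of_val_eq_smul ha
  ext i j
  fin_cases i <;> fin_cases j <;> simp [hb, hd, mul_div_cancel₀ _ ha]

lemma card_stabilizer_basePoint :
    Nat.card (MulAction.stabilizer (G F) (basePoint F)) = Nat.card F := by
  let f : F → MulAction.stabilizer (G F) (basePoint F) := fun t =>
    ⟨⟨collineation (upperRightHom t), collineation_mem_G _⟩,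
      collineation_upperRightHom_smul_basePoint t⟩
  refine (Nat.card_congr (Equiv.ofBijective f ⟨fun t t' h => ?_, ?_⟩)).symm
  · exact injective_collineation_upperRightHom (congrArg (fun g => g.1.1) h)
  · rintro ⟨⟨σ, hσ⟩, hfix⟩
    rw [G_eq_range] at hσ
    obtain ⟨A, rfl⟩ := hσ
    exact ⟨_, Subtype.ext (Subtype.ext (collineation_eq_upperRightHom hfix).symm)⟩

end Stabilizer

section Main
variable {F : Type} [Field F]

lemma exists_mem_G_smul_eq {P P' : Submodule F (Fin 4 → F)} (hP : P ∈ coneMinusBase F)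
    (hP' : P' ∈ coneMinusBase F) : ∃ g ∈ G F, g • P = P' := by
  have hP'P : P' ∈ MulAction.orbit (G F) P := by
    rw [MulAction.orbit_eq_iff.mpr (coneMinusBase_subset_orbit hP)]
    exact coneMinusBase_subset_orbit hP'
  obtain ⟨g, rfl⟩ := hP'P
  exact ⟨g, g.2, rfl⟩

lemma card_stabilizer_of_mem_coneMinusBase {P : Submodule F (Fin 4 → F)}
    (hP : P ∈ coneMinusBase F) : Nat.card (MulAction.stabilizer (G F) P) = Nat.card F := by
  obtain ⟨g, rfl⟩ := coneMinusBase_subset_orbit hP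
  exact (Nat.card_congr (MulAction.stabilizerEquivStabilizer rfl).toEquiv).symm.trans
    card_stabilizer_basePoint

end Main

theorem statement_1_general {F : Type} [Field F] [Fintype F] (q : ℕ)
    (hq : Fintype.card F = q) :
    (∀ P ∈ quadric F 0 \ (conicC F ∪ {pointU4 F}),
      ∀ P' ∈ quadric F 0 \ (conicC F ∪ {pointU4 F}), ∃ g ∈ G F, g • P = P') ∧
    (quadric F 0 \ (conicC F ∪ {pointU4 F})).ncard = q ^ 2 - 1 ∧
    (∀ P ∈ quadric F 0 \ (conicC F ∪ {pointU4 F}),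
      Nat.card (MulAction.stabilizer (G F) P) = q) := by
  subst hq
  exact ⟨fun P hP P' hP' => exists_mem_G_smul_eq hP hP', ncard_coneMinusBase,
    fun P hP => (card_stabilizer_of_mem_coneMinusBase hP).trans Nat.card_eq_fintype_card⟩

theorem statement_1 {F : Type} [Field F] [Fintype F] (q : ℕ)
    (hq : Fintype.card F = q) (hodd : Odd q) :
    (∀ P ∈ quadric F 0 \ (conicC F ∪ {pointU4 F}),
      ∀ P' ∈ quadric F 0 \ (conicC F ∪ {pointU4 F}), ∃ g ∈ G F, g • P = P') ∧
    (quadric F 0 \ (conicC F ∪ {pointU4 F})).ncard = q ^ 2 - 1 ∧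
    (∀ P ∈ quadric F 0 \ (conicC F ∪ {pointU4 F}),
      Nat.card (MulAction.stabilizer (G F) P) = q) :=
  statement_1_general q hq
end

section
/- Through each point of type E of PG(3,q) there pass exactly: one line of L₃', q−1 lines of L₄', 2(q−1) lines of L₄, and no line of L₁, L₂, L₃, L₁' or L₂'. -/
/-!
Write `P = ⟨w + e₄⟩` with `w ∈ π`, so that `U₄P` meets `π` in `⟨w⟩`. A point `⟨w⟩` of `π` off `C`
is external exactly when `-F₀(w) = w₂² - w₁w₃` is a nonzero square: the points of `C` whose
tangent passes through `⟨w⟩` are the roots of a binary quadratic form of discriminant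
`4 (w₂² - w₁w₃)`, and for an external point there are two of them.

No line of `π` passes through `P`, and `U₄P` is the only line through `U₄` and `P`; it contains
`w`, which is off `Q₀`. Since `F_λ(w + e₄) = F₀(w) + λ` while the polar form pairs `w + e₄` with a
point of `π` as it pairs `w`, whatever `λ`, the line joining `P` to a point `c` of `C` is secant to
every `Q_λ` unless the tangent at `c` passes through `⟨w⟩`; this leaves `q - 1` lines of `L₄'`.
A line through `P` tangent to `Q₀` away from `U₄` touches it at a point `c + u e₄` with `c ∈ C`
and the tangent at `c` through `⟨w⟩`; it meets `π` in `⟨c - u w⟩`, where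
`-F₀(c - u w) = u² (-F₀(w))`, a point of `E` exactly when `u ≠ 0`: this gives the `2 (q - 1)`
lines of `L₄`.
-/

namespace PG3

open Submodule

variable {F : Type} [Field F]

lemma two_ne_zero_of_odd_card [Fintype F] (h : Odd (Fintype.card F)) : (2 : F) ≠ 0 :=
  Ring.two_ne_zero fun hchar => by
    have := FiniteField.even_card_of_char_two hchar
    rw [Nat.odd_iff] at h
    omega

lemma setOf_mem_and_le_eq_empty {α : Type*} [Preorder α] {S : Set α} {a b : α}
    (hS : ∀ l ∈ S, l ≤ b) (ha : ¬ a ≤ b) : {l | l ∈ S ∧ a ≤ l} = ∅ :=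
  Set.eq_empty_of_forall_notMem fun l ⟨hl, hal⟩ => ha (hal.trans (hS l hl))

lemma isPoint_span_singleton {v : Fin 4 → F} (hv : v ≠ 0) : isPoint F (F ∙ v) :=
  finrank_span_singleton hv

lemma exists_eq_span_singleton {P : Submodule F (Fin 4 → F)} (hP : isPoint F P) :
    ∃ v, v ≠ 0 ∧ P = F ∙ v := by
  obtain ⟨v, hvP, hv, hle⟩ :=
    (rank_submodule_eq_one_iff P).mp (Module.rank_eq_one_iff_finrank_eq_one.mpr hP)
  exact ⟨v, hv, le_antisymm hle ((span_singleton_le_iff_mem v P).mpr hvP)⟩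

lemma ne_zero_of_isPoint_span_singleton {v : Fin 4 → F} (h : isPoint F (F ∙ v)) : v ≠ 0 := by
  rintro rfl
  rw [isPoint, span_zero_singleton, finrank_bot] at h
  exact zero_ne_one h

lemma isLine_span_pair {u v : Fin 4 → F} (h : LinearIndependent F ![u, v]) :
    isLine F (span F {u, v}) := by
  rw [isLine, ← Matrix.range_cons_cons_empty, finrank_span_eq_card h, Fintype.card_fin]

lemma eq_span_pair_of_isLine {l : Submodule F (Fin 4 → F)} {u v : Fin 4 → F} (hl : isLine F l)
    (hu : u ∈ l) (hv : v ∈ l) (h : LinearIndependent F ![u, v]) : l = span F {u, v} :=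
  (eq_of_le_of_finrank_le (span_le.mpr (Set.insert_subset hu (Set.singleton_subset_iff.mpr hv)))
    (by rw [isLine_span_pair h, hl])).symm

lemma mem_span_pair_left (u v : Fin 4 → F) : u ∈ span F {u, v} :=
  subset_span (Set.mem_insert u {v})

lemma mem_span_pair_right (u v : Fin 4 → F) : v ∈ span F {u, v} :=
  subset_span (Set.mem_insert_of_mem u rfl)

lemma Fq_smul (lam c : F) (v : Fin 4 → F) : Fq F lam (c • v) = c ^ 2 * Fq F lam v := by
  simp only [Fq, Pi.smul_apply, smul_eq_mul]
  ring

lemma Fq_smul_add_smul (lam a b : F) (u v : Fin 4 → F) :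
    Fq F lam (a • u + b • v) =
      a ^ 2 * Fq F lam u + a * b * polarFq F lam u v + b ^ 2 * Fq F lam v := by
  rw [polarFq_eq]
  simp only [Fq, Pi.add_apply, Pi.smul_apply, smul_eq_mul]
  ring

lemma polarFq_comm (lam : F) (u v : Fin 4 → F) : polarFq F lam u v = polarFq F lam v u := by
  rw [polarFq_eq, polarFq_eq]
  ring

lemma span_singleton_mem_quadric_iff {v : Fin 4 → F} (hv : v ≠ 0) (lam : F) :
    F ∙ v ∈ quadric F lam ↔ Fq F lam v = 0 := by
  refine ⟨fun h => h.2 v (mem_span_singleton_self v), fun h => ⟨isPoint_span_singleton hv, ?_⟩⟩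
  rintro _ hw
  obtain ⟨c, rfl⟩ := mem_span_singleton.mp hw
  rw [Fq_smul, h, mul_zero]

lemma linearIndependent_of_Fq {lam : F} {p z : Fin 4 → F} (hFp : Fq F lam p ≠ 0) (hz : z ≠ 0)
    (hFz : Fq F lam z = 0) : LinearIndependent F ![p, z] := by
  refine LinearIndependent.pair_iff.mpr fun a b hab => ?_
  have ha : a = 0 := by
    have h := congrArg (Fq F lam) (eq_neg_of_add_eq_zero_left hab)
    rw [Fq_smul, ← neg_smul, Fq_smul, hFz, mul_zero] at h
    exact pow_eq_zero_iff two_ne_zero |>.mp ((mul_eq_zero.mp h).resolve_right hFp)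
  subst ha
  rw [zero_smul, zero_add, smul_eq_zero] at hab
  exact ⟨rfl, hab.resolve_right hz⟩

section LineAndQuadric

variable {lam : F} {p z : Fin 4 → F}

lemma exists_smul_add_smul_of_mem_qpts {Q : Submodule F (Fin 4 → F)} (hFz : Fq F lam z = 0)
    (hQ : Q ∈ qpts F lam (span F {p, z})) :
    ∃ a b : F, a • p + b • z ≠ 0 ∧ Q = F ∙ (a • p + b • z) ∧
      a * (a * Fq F lam p + b * polarFq F lam p z) = 0 := by
  obtain ⟨v, hv, rfl⟩ := exists_eq_span_singleton hQ.1.1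
  obtain ⟨a, b, rfl⟩ := mem_span_pair.mp (hQ.2 (mem_span_singleton_self v))
  have hFv := hQ.1.2 _ (mem_span_singleton_self _)
  rw [Fq_smul_add_smul, hFz] at hFv
  exact ⟨a, b, hv, rfl, by linear_combination hFv⟩

lemma qpts_span_pair_of_polarFq_eq_zero (hFp : Fq F lam p ≠ 0) (hz : z ≠ 0)
    (hFz : Fq F lam z = 0) (hpol : polarFq F lam p z = 0) :
    qpts F lam (span F {p, z}) = {F ∙ z} := by
  ext Q
  refine ⟨fun hQ => ?_, ?_⟩
  · obtain ⟨a, b, hv, rfl, hab⟩ := exists_smul_add_smul_of_mem_qpts hFz hQ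
    rw [hpol, mul_zero, add_zero, ← mul_assoc, mul_eq_zero, mul_self_eq_zero] at hab
    obtain rfl := hab.resolve_right hFp
    rw [zero_smul, zero_add] at hv ⊢
    exact span_singleton_smul_eq (left_ne_zero_of_smul hv).isUnit z
  · rintro rfl
    exact ⟨(span_singleton_mem_quadric_iff hz lam).mpr hFz,
      (span_singleton_le_iff_mem _ _).mpr (mem_span_pair_right p z)⟩

lemma qpts_span_pair_of_polarFq_ne_zero (hind : LinearIndependent F ![p, z]) (hz : z ≠ 0)
    (hFz : Fq F lam z = 0) (hpol : polarFq F lam p z ≠ 0) :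
    qpts F lam (span F {p, z}) =
      {F ∙ z, F ∙ (polarFq F lam p z • p - Fq F lam p • z)} := by
  set w := polarFq F lam p z • p - Fq F lam p • z
  have hw : w ≠ 0 := fun h => hpol (LinearIndependent.pair_iff.mp hind _ (-Fq F lam p)
    (by simpa only [w, sub_eq_add_neg, neg_smul] using h)).1
  have hFw : Fq F lam w = 0 := by
    rw [show w = polarFq F lam p z • p + (-Fq F lam p) • z by module, Fq_smul_add_smul, hFz]
    ring
  ext Q
  refine ⟨fun hQ => ?_, ?_⟩
  · obtain ⟨a, b, hv, rfl, hab⟩ := exists_smul_add_smul_of_mem_qpts hFz hQ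
    rcases mul_eq_zero.mp hab with rfl | hab
    · rw [zero_smul, zero_add] at hv ⊢
      exact .inl (span_singleton_smul_eq (left_ne_zero_of_smul hv).isUnit z)
    · refine .inr ?_
      have ha : a ≠ 0 := by
        rintro rfl
        rw [zero_mul, zero_add, mul_eq_zero] at hab
        exact hv (by simp [hab.resolve_right hpol])
      calc F ∙ (a • p + b • z)
          = F ∙ (polarFq F lam p z • (a • p + b • z)) := (span_singleton_smul_eq hpol.isUnit _).symm
        _ = F ∙ (a • w) := congrArg (F ∙ ·) (by linear_combination (norm := module) hab • z)
        _ = F ∙ w := span_singleton_smul_eq ha.isUnit w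
  · rintro (rfl | rfl)
    · exact ⟨(span_singleton_mem_quadric_iff hz lam).mpr hFz,
        (span_singleton_le_iff_mem _ _).mpr (mem_span_pair_right p z)⟩
    · exact ⟨(span_singleton_mem_quadric_iff hw lam).mpr hFw,
        (span_singleton_le_iff_mem _ _).mpr (sub_mem (smul_mem _ _ (mem_span_pair_left p z))
          (smul_mem _ _ (mem_span_pair_right p z)))⟩

lemma secantTo_span_pair (hind : LinearIndependent F ![p, z]) (hz : z ≠ 0)
    (hFz : Fq F lam z = 0) (hpol : polarFq F lam p z ≠ 0) : secantTo F (span F {p, z}) lam := by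
  rw [secantTo, qpts_span_pair_of_polarFq_ne_zero hind hz hFz hpol]
  refine Set.ncard_pair fun h => ?_
  obtain ⟨γ, hγ⟩ := span_singleton_eq_span_singleton.mp h
  rw [Units.smul_def] at hγ
  exact hpol (LinearIndependent.pair_iff.mp hind (polarFq F lam p z) (-Fq F lam p - γ)
    (by linear_combination (norm := module) -hγ)).1

lemma polarFq_eq_zero_of_tangentTo {l : Submodule F (Fin 4 → F)} (hl : isLine F l) (hp : p ∈ l)
    (hz : z ∈ l) (hFp : Fq F lam p ≠ 0) (hz0 : z ≠ 0) (hFz : Fq F lam z = 0)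
    (ht : tangentTo F l lam) : polarFq F lam p z = 0 := by
  by_contra hpol
  have hind := linearIndependent_of_Fq hFp hz0 hFz
  have hsec := secantTo_span_pair hind hz0 hFz hpol
  rw [← eq_span_pair_of_isLine hl hp hz hind, secantTo, ht] at hsec
  exact absurd hsec (by norm_num)

/-- The line lies on `Q_λ`, so it carries at least three of its points. -/
lemma not_secantTo_span_pair (hind : LinearIndependent F ![p, z]) (hFp : Fq F lam p = 0)
    (hFz : Fq F lam z = 0) (hpol : polarFq F lam p z = 0) : ¬ secantTo F (span F {p, z}) lam := by
  have mem_qpts : ∀ a b : F, a • p + b • z ≠ 0 →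
      F ∙ (a • p + b • z) ∈ qpts F lam (span F {p, z}) := fun a b hv =>
    ⟨(span_singleton_mem_quadric_iff hv lam).mpr (by simp [Fq_smul_add_smul, hFp, hFz, hpol]),
      (span_singleton_le_iff_mem _ _).mpr
        (add_mem (smul_mem _ _ (mem_span_pair_left p z)) (smul_mem _ _ (mem_span_pair_right p z)))⟩
  have hne : ∀ a b : F, (a, b) ≠ 0 → a • p + b • z ≠ 0 := fun a b hab h =>
    hab (Prod.ext_iff.mpr (LinearIndependent.pair_iff.mp hind a b h))
  have hdistinct : ∀ a b c d : F, F ∙ (a • p + b • z) = F ∙ (c • p + d • z) →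
      a * d = b * c := by
    intro a b c d h
    obtain ⟨γ, hγ⟩ := span_singleton_eq_span_singleton.mp h
    rw [Units.smul_def] at hγ
    have := LinearIndependent.pair_iff.mp hind (γ * a - c) (γ * b - d)
      (by linear_combination (norm := module) hγ)
    linear_combination b * this.1 - a * this.2
  intro hsec
  obtain ⟨A, B, -, hAB⟩ := Set.ncard_eq_two.mp hsec
  have h10 := mem_qpts 1 0 (hne 1 0 (by simp))
  have h01 := mem_qpts 0 1 (hne 0 1 (by simp))
  have h11 := mem_qpts 1 1 (hne 1 1 (by simp))
  rw [hAB] at h10 h01 h11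
  rcases h10 with h10 | h10 <;> rcases h01 with h01 | h01 <;> rcases h11 with h11 | h11 <;>
    first
    | exact absurd (hdistinct _ _ _ _ (h10.trans h01.symm)) (by norm_num)
    | exact absurd (hdistinct _ _ _ _ (h10.trans h11.symm)) (by norm_num)
    | exact absurd (hdistinct _ _ _ _ (h01.trans h11.symm)) (by norm_num)

end LineAndQuadric

/-- The conic `C`, parametrized by `F ∪ {∞}` with `none` as `∞`. -/
def conicVec : Option F → Fin 4 → F
  | some t => ![1, t, t ^ 2, 0]
  | none => ![0, 0, 1, 0]

lemma conicVec_three (x : Option F) : conicVec x 3 = 0 := by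
  cases x <;> rfl

lemma conicVec_ne_zero (x : Option F) : conicVec x ≠ 0 := by
  cases x <;> intro h
  · simpa [conicVec] using congr_fun h 2
  · simpa [conicVec] using congr_fun h 0

lemma Fq_conicVec (lam : F) (x : Option F) : Fq F lam (conicVec x) = 0 := by
  cases x <;> simp [conicVec, Fq]

lemma eq_of_conicVec_eq_smul {x y : Option F} {γ : F} (h : conicVec y = γ • conicVec x) :
    y = x ∧ γ = 1 := by
  have h0 := congr_fun h 0
  have h1 := congr_fun h 1
  have h2 := congr_fun h 2
  cases x <;> cases y <;> simp [conicVec] at h0 h1 h2 ⊢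
  · exact h2.symm
  · simp [← h0] at h2
  · exact ⟨by rw [h1, ← h0, one_mul], h0.symm⟩

lemma eq_of_span_conicVec_eq {x y : Option F} (h : F ∙ conicVec x = F ∙ conicVec y) : x = y := by
  obtain ⟨γ, hγ⟩ := span_singleton_eq_span_singleton.mp h
  exact (eq_of_conicVec_eq_smul hγ.symm).1.symm

lemma span_singleton_mem_conicC_iff {v : Fin 4 → F} (hv : v ≠ 0) :
    F ∙ v ∈ conicC F ↔ v 3 = 0 ∧ Fq F 0 v = 0 := by
  rw [conicC, Set.mem_ofPred_eq, span_singleton_mem_quadric_iff hv, span_singleton_le_iff_mem]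
  exact and_comm

lemma span_conicVec_mem_conicC (x : Option F) : F ∙ conicVec x ∈ conicC F :=
  (span_singleton_mem_conicC_iff (conicVec_ne_zero x)).mpr ⟨conicVec_three x, Fq_conicVec 0 x⟩

lemma exists_eq_span_conicVec {Q : Submodule F (Fin 4 → F)} (hQ : Q ∈ conicC F) :
    ∃ x, Q = F ∙ conicVec x := by
  obtain ⟨v, hv, rfl⟩ := exists_eq_span_singleton hQ.1.1
  obtain ⟨h3, hF⟩ := (span_singleton_mem_conicC_iff hv).mp hQ
  simp only [Fq, zero_mul, add_zero] at hF
  by_cases h0 : v 0 = 0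
  · have h1 : v 1 = 0 := pow_eq_zero_iff two_ne_zero |>.mp (by linear_combination -hF + v 2 * h0)
    have h2 : v 2 ≠ 0 := fun h2 => hv (funext fun i => by fin_cases i <;> assumption)
    refine ⟨none, ?_⟩
    rw [← span_singleton_smul_eq h2.isUnit (conicVec none)]
    refine congrArg (F ∙ ·) (funext fun i => ?_)
    fin_cases i <;> simp [conicVec, h0, h1, h3]
  · refine ⟨some (v 1 / v 0), ?_⟩
    rw [← span_singleton_smul_eq (isUnit_iff_ne_zero.mpr h0) (conicVec _)]
    refine congrArg (F ∙ ·) (funext fun i => ?_)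
    fin_cases i <;> simp [conicVec, h3]
    · field_simp
    · field_simp
      linear_combination hF

/-- The parameters of the points of `C` whose tangent line passes through `w`. -/
def tangentParams (w : Fin 4 → F) : Set (Option F) :=
  {x | polarFq F 0 (conicVec x) w = 0}

lemma polarFq_conicVec_some (t : F) (w : Fin 4 → F) :
    polarFq F 0 (conicVec (some t)) w = w 0 * (t * t) + -2 * w 1 * t + w 2 := by
  rw [polarFq_eq]
  simp [conicVec]
  ring

lemma polarFq_conicVec_none (w : Fin 4 → F) : polarFq F 0 (conicVec none) w = w 0 := by
  rw [polarFq_eq]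
  simp [conicVec]

lemma isSquare_neg_Fq_of_mem_tangentParams {w : Fin 4 → F} {x : Option F}
    (hx : x ∈ tangentParams w) : IsSquare (-Fq F 0 w) := by
  cases x with
  | none => exact ⟨w 1, by simp_all [tangentParams, polarFq_conicVec_none, Fq]; ring⟩
  | some t =>
    refine ⟨w 0 * t - w 1, ?_⟩
    simp only [tangentParams, Set.mem_ofPred_eq, polarFq_conicVec_some] at hx
    simp only [Fq]
    linear_combination -(w 0) * hx

lemma ncard_tangentParams [NeZero (2 : F)] {w : Fin 4 → F} {s : F} (hs : s ≠ 0)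
    (hd : -Fq F 0 w = s * s) : (tangentParams w).ncard = 2 := by
  simp only [Fq, zero_mul, add_zero] at hd
  rw [Set.ncard_eq_two]
  by_cases h0 : w 0 = 0
  · have h1 : w 1 ≠ 0 := fun h1 => hs (mul_self_eq_zero.mp (by rw [← hd, h0, h1]; ring))
    refine ⟨none, some (w 2 / (2 * w 1)), by simp, Set.ext fun x => ?_⟩
    cases x with
    | none => simp [tangentParams, polarFq_conicVec_none, h0]
    | some t =>
      simp only [tangentParams, Set.mem_ofPred_eq, polarFq_conicVec_some, h0, Set.mem_insert_iff,
        Set.mem_singleton_iff, reduceCtorEq, Option.some.injEq, false_or]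
      rw [eq_div_iff (mul_ne_zero two_ne_zero h1)]
      constructor <;> intro h <;> linear_combination -h
  · have hdisc : discrim (w 0) (-2 * w 1) (w 2) = (2 * s) * (2 * s) := by
      rw [discrim]
      linear_combination 4 * hd
    refine ⟨some ((- (-2 * w 1) + 2 * s) / (2 * w 0)), some ((- (-2 * w 1) - 2 * s) / (2 * w 0)),
      ?_, Set.ext fun x => ?_⟩
    · rw [Ne, Option.some.injEq, div_left_inj' (mul_ne_zero two_ne_zero h0)]
      intro h
      have h4 : (2 : F) * (2 * s) = 0 := by linear_combination h
      exact hs (by simpa [two_ne_zero] using h4)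
    cases x with
    | none => simp [tangentParams, polarFq_conicVec_none, h0]
    | some t =>
      simp only [tangentParams, Set.mem_ofPred_eq, polarFq_conicVec_some, Set.mem_insert_iff,
        Set.mem_singleton_iff, Option.some.injEq]
      exact quadratic_eq_zero_iff h0 hdisc t

lemma setOf_mem_conicC_le_eq_qpts {m : Submodule F (Fin 4 → F)} (hm : m ≤ planePi F) :
    {P | P ∈ conicC F ∧ P ≤ m} = qpts F 0 m :=
  Set.ext fun _ => ⟨fun ⟨hC, hle⟩ => ⟨hC.1, hle⟩, fun ⟨hQ, hle⟩ => ⟨⟨hQ, hle.trans hm⟩, hle⟩⟩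

section ExternalPoint

variable {w : Fin 4 → F}

lemma qpts_span_conicVec (hFw : Fq F 0 w ≠ 0) {x : Option F} (hx : x ∈ tangentParams w) :
    qpts F 0 (span F {w, conicVec x}) = {F ∙ conicVec x} :=
  qpts_span_pair_of_polarFq_eq_zero hFw (conicVec_ne_zero x) (Fq_conicVec 0 x)
    ((polarFq_comm _ _ _).trans hx)

lemma lineL1_through_eq_image (hw3 : w 3 = 0) (hFw : Fq F 0 w ≠ 0) :
    {m | m ∈ lineL1 F ∧ F ∙ w ≤ m} = (fun x => span F {w, conicVec x}) '' tangentParams w := by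
  ext m
  constructor
  · rintro ⟨⟨hm, hmπ, htan⟩, hwm⟩
    obtain ⟨Q, hQ⟩ := Set.ncard_eq_one.mp htan
    have hQm : Q ∈ {P | P ∈ conicC F ∧ P ≤ m} := hQ ▸ rfl
    obtain ⟨x, rfl⟩ := exists_eq_span_conicVec hQm.1
    have hwm' := (span_singleton_le_iff_mem _ _).mp hwm
    have hxm := (span_singleton_le_iff_mem _ _).mp hQm.2
    rw [setOf_mem_conicC_le_eq_qpts hmπ] at htan
    refine ⟨x, ?_, (eq_span_pair_of_isLine hm hwm' hxm
      (linearIndependent_of_Fq hFw (conicVec_ne_zero x) (Fq_conicVec 0 x))).symm⟩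
    exact (polarFq_comm _ _ _).trans (polarFq_eq_zero_of_tangentTo hm hwm' hxm hFw
      (conicVec_ne_zero x) (Fq_conicVec 0 x) htan)
  · rintro ⟨x, hx, rfl⟩
    have hπ : span F {w, conicVec x} ≤ planePi F :=
      span_le.mpr (Set.insert_subset hw3 (Set.singleton_subset_iff.mpr (conicVec_three x)))
    refine ⟨⟨isLine_span_pair (linearIndependent_of_Fq hFw (conicVec_ne_zero x)
      (Fq_conicVec 0 x)), hπ, ?_⟩, (span_singleton_le_iff_mem _ _).mpr (mem_span_pair_left _ _)⟩
    rw [setOf_mem_conicC_le_eq_qpts hπ, qpts_span_conicVec hFw hx, Set.ncard_singleton]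

lemma ncard_lineL1_through (hw3 : w 3 = 0) (hFw : Fq F 0 w ≠ 0) :
    {m | m ∈ lineL1 F ∧ F ∙ w ≤ m}.ncard = (tangentParams w).ncard := by
  rw [lineL1_through_eq_image hw3 hFw]
  refine Set.InjOn.ncard_image fun x hx y hy hxy => eq_of_span_conicVec_eq ?_
  simpa [qpts_span_conicVec hFw hx, qpts_span_conicVec hFw hy] using
    congrArg (qpts F 0) hxy

lemma Fq_ne_zero_of_mem_setE (hw3 : w 3 = 0) (hE : F ∙ w ∈ setE F) : Fq F 0 w ≠ 0 :=
  fun hF => hE.2.2.1 <| (span_singleton_mem_conicC_iff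
    (ne_zero_of_isPoint_span_singleton hE.1)).mpr ⟨hw3, hF⟩

lemma ncard_tangentParams_of_mem_setE (hw3 : w 3 = 0) (hE : F ∙ w ∈ setE F) :
    (tangentParams w).ncard = 2 := by
  rw [← ncard_lineL1_through hw3 (Fq_ne_zero_of_mem_setE hw3 hE)]
  exact hE.2.2.2

lemma isSquare_of_mem_setE (hw3 : w 3 = 0) (hE : F ∙ w ∈ setE F) : IsSquare (-Fq F 0 w) := by
  obtain ⟨x, hx⟩ := Set.nonempty_of_ncard_ne_zero
    (by rw [ncard_tangentParams_of_mem_setE hw3 hE]; norm_num)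
  exact isSquare_neg_Fq_of_mem_tangentParams hx

lemma mem_setE_of_isSquare [NeZero (2 : F)] (hw : w ≠ 0) (hw3 : w 3 = 0) (hFw : Fq F 0 w ≠ 0)
    (hsq : IsSquare (-Fq F 0 w)) : F ∙ w ∈ setE F := by
  obtain ⟨s, hs⟩ := hsq
  have hs0 : s ≠ 0 := by
    rintro rfl
    exact hFw (neg_eq_zero.mp (by rw [hs, mul_zero]))
  refine ⟨isPoint_span_singleton hw, (span_singleton_le_iff_mem _ _).mpr hw3,
    fun hC => hFw ((span_singleton_mem_conicC_iff hw).mp hC).2, ?_⟩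
  rw [ncard_lineL1_through hw3 hFw, ncard_tangentParams hs0 hs]

end ExternalPoint

def e4 : Fin 4 → F := Pi.single 3 1

@[simp] lemma e4_zero : (e4 : Fin 4 → F) 0 = 0 := rfl
@[simp] lemma e4_one : (e4 : Fin 4 → F) 1 = 0 := rfl
@[simp] lemma e4_two : (e4 : Fin 4 → F) 2 = 0 := rfl
@[simp] lemma e4_three : (e4 : Fin 4 → F) 3 = 1 := rfl

lemma pointU4_eq : pointU4 F = F ∙ e4 := rfl

lemma e4_ne_zero : (e4 : Fin 4 → F) ≠ 0 := fun h => by simpa using congr_fun h 3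

lemma Fq_e4 : Fq F 0 e4 = 0 := by simp [Fq]

lemma exists_eq_span_add_e4 {P : Submodule F (Fin 4 → F)} (hP : isPoint F P)
    (hPπ : ¬ P ≤ planePi F) : ∃ w, w 3 = 0 ∧ P = F ∙ (w + e4) := by
  obtain ⟨v, -, rfl⟩ := exists_eq_span_singleton hP
  have hv3 : v 3 ≠ 0 := fun h => hPπ ((span_singleton_le_iff_mem _ _).mpr h)
  refine ⟨(v 3)⁻¹ • v - e4, by simp [inv_mul_cancel₀ hv3], ?_⟩
  rw [sub_add_cancel, span_singleton_smul_eq (inv_ne_zero hv3).isUnit]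

lemma span_pair_inf_planePi {p : Fin 4 → F} (hp : p 3 = 1) (z : Fin 4 → F) :
    span F {p, z} ⊓ planePi F = F ∙ (z - z 3 • p) := by
  apply le_antisymm
  · rintro v ⟨hv, hv3⟩
    obtain ⟨a, b, rfl⟩ := mem_span_pair.mp hv
    have h3 : (a • p + b • z : Fin 4 → F) 3 = 0 := hv3
    simp only [Pi.add_apply, Pi.smul_apply, smul_eq_mul, hp] at h3
    have ha : a = -(b * z 3) := by linear_combination h3
    exact mem_span_singleton.mpr ⟨b, by rw [ha]; module⟩
  · refine (span_singleton_le_iff_mem _ _).mpr ⟨sub_mem (mem_span_pair_right _ _)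
      (smul_mem _ _ (mem_span_pair_left _ _)), ?_⟩
    show (z - z 3 • p : Fin 4 → F) 3 = 0
    simp [hp]

lemma pointU4_sup_span_singleton (v : Fin 4 → F) : pointU4 F ⊔ F ∙ v = span F {v, e4} := by
  rw [pointU4_eq, sup_comm, ← span_insert]

lemma Fq_zero_add_smul_e4 (v : Fin 4 → F) (c : F) : Fq F 0 (v + c • e4) = Fq F 0 v := by
  simp [Fq]

lemma conicVec_add_smul_e4_ne_smul_e4 (x : Option F) (u c : F) :
    conicVec x + u • e4 ≠ c • (e4 : Fin 4 → F) := by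
  intro h
  cases x
  · simpa [conicVec] using congr_fun h 2
  · simpa [conicVec] using congr_fun h 0

lemma eq_of_conicVec_add_smul_e4_eq_smul {x y : Option F} {u v γ : F}
    (h : conicVec y + v • e4 = γ • (conicVec x + u • e4)) : y = x ∧ v = u := by
  have hc : conicVec y = γ • conicVec x := funext fun i => by
    have hi := congr_fun h i
    fin_cases i <;> simp [conicVec_three] at hi ⊢ <;> exact hi
  obtain ⟨rfl, rfl⟩ := eq_of_conicVec_eq_smul hc
  simpa [conicVec_three] using congr_fun h 3

lemma eq_pointU4_or_of_mem_quadric_zero {Q : Submodule F (Fin 4 → F)} (hQ : Q ∈ quadric F 0) :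
    Q = pointU4 F ∨ ∃ (x : Option F) (u : F), Q = F ∙ (conicVec x + u • e4) := by
  obtain ⟨v, hv, rfl⟩ := exists_eq_span_singleton hQ.1
  have hFv := (span_singleton_mem_quadric_iff hv 0).mp hQ
  by_cases hv' : v + (-v 3) • e4 = 0
  · refine .inl ?_
    have hv3 : v 3 ≠ 0 := fun h => hv (by simpa [h] using hv')
    rw [pointU4_eq, ← span_singleton_smul_eq hv3.isUnit e4]
    exact congrArg (F ∙ ·) (by linear_combination (norm := module) hv')
  · have hC : F ∙ (v + (-v 3) • e4) ∈ conicC F :=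
      (span_singleton_mem_conicC_iff hv').mpr ⟨by simp, by rwa [Fq_zero_add_smul_e4]⟩
    obtain ⟨x, hx⟩ := exists_eq_span_conicVec hC
    obtain ⟨γ, hγ⟩ := span_singleton_eq_span_singleton.mp hx
    rw [Units.smul_def] at hγ
    refine .inr ⟨x, γ * v 3, ?_⟩
    rw [← span_singleton_smul_eq γ.isUnit v]
    exact congrArg (F ∙ ·) (by linear_combination (norm := module) hγ)

lemma Fq_conicVec_add_smul_e4 (x : Option F) (u : F) : Fq F 0 (conicVec x + u • e4) = 0 := by
  rw [Fq_zero_add_smul_e4, Fq_conicVec]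

lemma conicVec_add_smul_e4_ne_zero (x : Option F) (u : F) : conicVec x + u • e4 ≠ 0 :=
  fun h => conicVec_add_smul_e4_ne_smul_e4 x u 0 (h.trans (zero_smul F e4).symm)

section PointOffPlane

variable {w : Fin 4 → F}

lemma Fq_add_e4 (hw3 : w 3 = 0) (lam : F) : Fq F lam (w + e4) = Fq F 0 w + lam := by
  simp [Fq, hw3]

lemma polarFq_add_e4 (hw3 : w 3 = 0) (lam : F) {z : Fin 4 → F} (hz3 : z 3 = 0) :
    polarFq F lam (w + e4) z = polarFq F 0 w z := by
  simp [polarFq_eq, hw3, hz3]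

lemma span_add_e4_inf_planePi (hw3 : w 3 = 0) (z : Fin 4 → F) :
    span F {w + e4, z} ⊓ planePi F = F ∙ (z - z 3 • (w + e4)) :=
  span_pair_inf_planePi (by simp [hw3]) z

lemma span_add_e4_e4_inf_planePi (hw3 : w 3 = 0) :
    span F {w + e4, e4} ⊓ planePi F = F ∙ w := by
  rw [span_add_e4_inf_planePi hw3, e4_three, one_smul, sub_add_cancel_right,
    ← Set.neg_singleton, span_neg]

lemma span_add_e4_conicVec_inf_planePi (hw3 : w 3 = 0) (x : Option F) :
    span F {w + e4, conicVec x} ⊓ planePi F = F ∙ conicVec x := by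
  rw [span_add_e4_inf_planePi hw3, conicVec_three, zero_smul, sub_zero]

lemma span_add_e4_conicVec_add_smul_e4_inf_planePi (hw3 : w 3 = 0) (x : Option F) (u : F) :
    span F {w + e4, conicVec x + u • e4} ⊓ planePi F = F ∙ (conicVec x - u • w) := by
  rw [span_add_e4_inf_planePi hw3]
  congr 2
  simp only [Pi.add_apply, Pi.smul_apply, smul_eq_mul, conicVec_three, e4_three]
  module

lemma linearIndependent_add_e4_e4 (hw3 : w 3 = 0) (hFw : Fq F 0 w ≠ 0) :
    LinearIndependent F ![w + e4, e4] :=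
  linearIndependent_of_Fq (by rwa [Fq_add_e4 hw3, add_zero]) e4_ne_zero Fq_e4

lemma eq_span_of_pointU4_le (hw3 : w 3 = 0) (hFw : Fq F 0 w ≠ 0) {l : Submodule F (Fin 4 → F)}
    (hl : isLine F l) (hP : F ∙ (w + e4) ≤ l) (hU : pointU4 F ≤ l) : l = span F {w + e4, e4} :=
  eq_span_pair_of_isLine hl ((span_singleton_le_iff_mem _ _).mp hP)
    ((span_singleton_le_iff_mem _ _).mp hU) (linearIndependent_add_e4_e4 hw3 hFw)

lemma polarFq_add_e4_conicVec_add_smul_e4 (x : Option F) (u : F) :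
    polarFq F 0 (w + e4) (conicVec x + u • e4) = polarFq F 0 (conicVec x) w := by
  simp only [polarFq_eq, Pi.add_apply, Pi.smul_apply, smul_eq_mul, e4_zero, e4_one, e4_two]
  ring

lemma qpts_span_add_e4_conicVec_add_smul_e4 (hw3 : w 3 = 0) (hFw : Fq F 0 w ≠ 0)
    {x : Option F} (hx : x ∈ tangentParams w) (u : F) :
    qpts F 0 (span F {w + e4, conicVec x + u • e4}) = {F ∙ (conicVec x + u • e4)} :=
  qpts_span_pair_of_polarFq_eq_zero (by rwa [Fq_add_e4 hw3, add_zero])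
    (conicVec_add_smul_e4_ne_zero x u) (Fq_conicVec_add_smul_e4 x u)
    ((polarFq_add_e4_conicVec_add_smul_e4 x u).trans hx)

end PointOffPlane

section PointOfTypeE

variable {w : Fin 4 → F}

lemma lineL3'_through_eq_singleton (hw3 : w 3 = 0) (hE : F ∙ w ∈ setE F) :
    {l | l ∈ lineL3' F ∧ F ∙ (w + e4) ≤ l} = {span F {w + e4, e4}} := by
  have hFw := Fq_ne_zero_of_mem_setE hw3 hE
  ext l
  constructor
  · rintro ⟨⟨hl, hU, -⟩, hP⟩
    exact eq_span_of_pointU4_le hw3 hFw hl hP hU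
  · rintro rfl
    refine ⟨⟨isLine_span_pair (linearIndependent_add_e4_e4 hw3 hFw), ?_, ?_⟩, ?_⟩
    · exact (span_singleton_le_iff_mem _ _).mpr (mem_span_pair_right _ _)
    · rwa [span_add_e4_e4_inf_planePi hw3]
    · exact (span_singleton_le_iff_mem _ _).mpr (mem_span_pair_left _ _)

lemma lineL1'_through_eq_empty (hw3 : w 3 = 0) (hE : F ∙ w ∈ setE F) :
    {l | l ∈ lineL1' F ∧ F ∙ (w + e4) ≤ l} = ∅ := by
  refine Set.eq_empty_of_forall_notMem fun l ⟨⟨_, hU, hQ₀⟩, hP⟩ => ?_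
  have hw : w ∈ l := by
    simpa using sub_mem ((span_singleton_le_iff_mem _ _).mp hP)
      ((span_singleton_le_iff_mem e4 l).mp hU)
  exact Fq_ne_zero_of_mem_setE hw3 hE (hQ₀ w hw)

lemma lineL2'_through_eq_empty (hw3 : w 3 = 0) (hE : F ∙ w ∈ setE F) :
    {l | l ∈ lineL2' F ∧ F ∙ (w + e4) ≤ l} = ∅ := by
  refine Set.eq_empty_of_forall_notMem fun l ⟨⟨hl, hU, hI⟩, hP⟩ => ?_
  rw [eq_span_of_pointU4_le hw3 (Fq_ne_zero_of_mem_setE hw3 hE) hl hP hU,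
    span_add_e4_e4_inf_planePi hw3] at hI
  have h := hE.2.2.2
  rw [hI.2.2.2] at h
  exact absurd h (by norm_num)

/-- Joined to a point of `C` whose tangent passes through `⟨w⟩`, the point `⟨w + e₄⟩` spans a
line lying on `Q_λ` for `λ = -F₀(w)`. -/
lemma lineL4'_through_eq_image (hw3 : w 3 = 0) (hE : F ∙ w ∈ setE F) :
    {l | l ∈ lineL4' F ∧ F ∙ (w + e4) ≤ l} =
      (fun x => span F {w + e4, conicVec x}) '' (tangentParams w)ᶜ := by
  have hFw := Fq_ne_zero_of_mem_setE hw3 hE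
  have hFp : Fq F 0 (w + e4) ≠ 0 := by rwa [Fq_add_e4 hw3, add_zero]
  have hind : ∀ x, LinearIndependent F ![w + e4, conicVec x] := fun x =>
    linearIndependent_of_Fq hFp (conicVec_ne_zero x) (Fq_conicVec 0 x)
  have hpol : ∀ lam x, polarFq F lam (w + e4) (conicVec x) = polarFq F 0 (conicVec x) w :=
    fun lam x => (polarFq_add_e4 hw3 lam (conicVec_three x)).trans (polarFq_comm _ _ _)
  ext l
  constructor
  · rintro ⟨⟨hl, hC, hsec⟩, hP⟩
    obtain ⟨x, hx⟩ := exists_eq_span_conicVec hC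
    have hxl : conicVec x ∈ l := inf_le_left (a := l) (hx ▸ mem_span_singleton_self _)
    have hleq := eq_span_pair_of_isLine hl ((span_singleton_le_iff_mem _ _).mp hP) hxl (hind x)
    refine ⟨x, fun hxT => ?_, hleq.symm⟩
    refine not_secantTo_span_pair (hind x) (lam := -Fq F 0 w) ?_ (Fq_conicVec _ x) ?_
      (hleq ▸ hsec _)
    · rw [Fq_add_e4 hw3, add_neg_cancel]
    · rw [hpol]
      exact hxT
  · rintro ⟨x, hxT, rfl⟩
    refine ⟨⟨isLine_span_pair (hind x), ?_, fun lam => ?_⟩,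
      (span_singleton_le_iff_mem _ _).mpr (mem_span_pair_left _ _)⟩
    · rw [span_add_e4_conicVec_inf_planePi hw3]
      exact span_conicVec_mem_conicC x
    · exact secantTo_span_pair (hind x) (conicVec_ne_zero x) (Fq_conicVec lam x)
        (by rw [hpol]; exact hxT)

lemma ncard_lineL4'_through [Fintype F] {q : ℕ} (hq : Fintype.card F = q) (hw3 : w 3 = 0)
    (hE : F ∙ w ∈ setE F) : {l | l ∈ lineL4' F ∧ F ∙ (w + e4) ≤ l}.ncard = q - 1 := by
  rw [lineL4'_through_eq_image hw3 hE, Set.InjOn.ncard_image, Set.ncard_compl,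
    ncard_tangentParams_of_mem_setE hw3 hE, Nat.card_eq_fintype_card, Fintype.card_option, hq]
  · omega
  · intro x _ y _ hxy
    have := congrArg (· ⊓ planePi F) hxy
    simp only [span_add_e4_conicVec_inf_planePi hw3] at this
    exact eq_of_span_conicVec_eq this

lemma Fq_conicVec_sub_smul {x : Option F} (hx : x ∈ tangentParams w) (u : F) :
    Fq F 0 (conicVec x - u • w) = u ^ 2 * Fq F 0 w := by
  rw [sub_eq_add_neg, ← neg_smul, ← one_smul F (conicVec x), Fq_smul_add_smul, Fq_conicVec,
    show polarFq F 0 (conicVec x) w = 0 from hx]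
  ring

lemma span_conicVec_sub_smul_mem_setE_iff [NeZero (2 : F)] (hw3 : w 3 = 0)
    (hE : F ∙ w ∈ setE F) {x : Option F} (hx : x ∈ tangentParams w) (u : F) :
    F ∙ (conicVec x - u • w) ∈ setE F ↔ u ≠ 0 := by
  have hFw := Fq_ne_zero_of_mem_setE hw3 hE
  constructor
  · rintro hE' rfl
    rw [zero_smul, sub_zero] at hE'
    exact hE'.2.2.1 (span_conicVec_mem_conicC x)
  · intro hu
    have hF : Fq F 0 (conicVec x - u • w) ≠ 0 := by
      rw [Fq_conicVec_sub_smul hx]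
      exact mul_ne_zero (pow_ne_zero 2 hu) hFw
    refine mem_setE_of_isSquare (fun h => hF (by rw [h]; simp [Fq]))
      (by simp [conicVec_three, hw3]) hF ?_
    obtain ⟨r, hr⟩ := isSquare_of_mem_setE hw3 hE
    exact ⟨u * r, by rw [Fq_conicVec_sub_smul hx]; linear_combination u ^ 2 * hr⟩

lemma lineL4_through_eq_image [NeZero (2 : F)] (hw3 : w 3 = 0) (hE : F ∙ w ∈ setE F) :
    {l | l ∈ lineL4 F ∧ F ∙ (w + e4) ≤ l} =
      (fun y : Option F × F => span F {w + e4, conicVec y.1 + y.2 • e4}) ''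
        (tangentParams w ×ˢ {0}ᶜ) := by
  have hFw := Fq_ne_zero_of_mem_setE hw3 hE
  have hFp : Fq F 0 (w + e4) ≠ 0 := by rwa [Fq_add_e4 hw3, add_zero]
  have hind : ∀ x u, LinearIndependent F ![w + e4, conicVec x + u • e4] := fun x u =>
    linearIndependent_of_Fq hFp (conicVec_add_smul_e4_ne_zero x u) (Fq_conicVec_add_smul_e4 x u)
  ext l
  constructor
  · rintro ⟨⟨hl, hU, htan, hEl⟩, hP⟩
    obtain ⟨Q, hQ⟩ := Set.ncard_eq_one.mp htan
    have hQl : Q ∈ qpts F 0 l := hQ ▸ rfl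
    obtain hQU | ⟨x, u, rfl⟩ := eq_pointU4_or_of_mem_quadric_zero hQl.1
    · exact absurd (hQU ▸ hQl.2) hU
    have hpl := (span_singleton_le_iff_mem _ _).mp hP
    have hzl := (span_singleton_le_iff_mem _ _).mp hQl.2
    have hleq := eq_span_pair_of_isLine hl hpl hzl (hind x u)
    have hxT : x ∈ tangentParams w := (polarFq_add_e4_conicVec_add_smul_e4 x u).symm.trans
      (polarFq_eq_zero_of_tangentTo hl hpl hzl hFp (conicVec_add_smul_e4_ne_zero x u)
        (Fq_conicVec_add_smul_e4 x u) htan)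
    rw [hleq, span_add_e4_conicVec_add_smul_e4_inf_planePi hw3,
      span_conicVec_sub_smul_mem_setE_iff hw3 hE hxT] at hEl
    exact ⟨(x, u), ⟨hxT, hEl⟩, hleq.symm⟩
  · rintro ⟨⟨x, u⟩, ⟨hxT, hu⟩, rfl⟩
    have hqpts := qpts_span_add_e4_conicVec_add_smul_e4 hw3 hFw hxT u
    refine ⟨⟨isLine_span_pair (hind x u), fun hU => ?_,
      by rw [tangentTo, hqpts, Set.ncard_singleton], ?_⟩,
      (span_singleton_le_iff_mem _ _).mpr (mem_span_pair_left _ _)⟩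
    · have hUq : pointU4 F ∈ qpts F 0 (span F {w + e4, conicVec x + u • e4}) :=
        ⟨(span_singleton_mem_quadric_iff e4_ne_zero 0).mpr Fq_e4, hU⟩
      rw [hqpts, Set.mem_singleton_iff, pointU4_eq] at hUq
      obtain ⟨γ, hγ⟩ := span_singleton_eq_span_singleton.mp hUq
      exact conicVec_add_smul_e4_ne_smul_e4 x u γ hγ.symm
    · rw [span_add_e4_conicVec_add_smul_e4_inf_planePi hw3,
        span_conicVec_sub_smul_mem_setE_iff hw3 hE hxT]
      exact hu

lemma ncard_lineL4_through [Fintype F] [NeZero (2 : F)] {q : ℕ} (hq : Fintype.card F = q)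
    (hw3 : w 3 = 0) (hE : F ∙ w ∈ setE F) :
    {l | l ∈ lineL4 F ∧ F ∙ (w + e4) ≤ l}.ncard = 2 * (q - 1) := by
  have hFw := Fq_ne_zero_of_mem_setE hw3 hE
  rw [lineL4_through_eq_image hw3 hE, Set.InjOn.ncard_image, Set.ncard_prod,
    ncard_tangentParams_of_mem_setE hw3 hE, Set.ncard_compl, Set.ncard_singleton,
    Nat.card_eq_fintype_card, hq]
  rintro ⟨x, u⟩ ⟨hxT, -⟩ ⟨y, v⟩ ⟨hyT, -⟩ hxy
  have h := congrArg (qpts F 0) hxy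
  simp only [qpts_span_add_e4_conicVec_add_smul_e4 hw3 hFw hxT,
    qpts_span_add_e4_conicVec_add_smul_e4 hw3 hFw hyT, Set.singleton_eq_singleton_iff] at h
  obtain ⟨γ, hγ⟩ := span_singleton_eq_span_singleton.mp h
  obtain ⟨rfl, rfl⟩ := eq_of_conicVec_add_smul_e4_eq_smul hγ.symm
  rfl

end PointOfTypeE

end PG3

open PG3

theorem statement_11 {F : Type} [Field F] [Fintype F] (q : ℕ)
    (hq : Fintype.card F = q) (hodd : Odd q) :
    ∀ P : Submodule F (Fin 4 → F), isPoint F P → ¬ P ≤ planePi F → P ≠ pointU4 F →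
      ((pointU4 F ⊔ P) ⊓ planePi F) ∈ setE F →
      ({l | l ∈ lineL3' F ∧ P ≤ l}).ncard = 1 ∧
      ({l | l ∈ lineL4' F ∧ P ≤ l}).ncard = q - 1 ∧
      ({l | l ∈ lineL4 F ∧ P ≤ l}).ncard = 2 * (q - 1) ∧
      {l | l ∈ lineL1 F ∧ P ≤ l} = ∅ ∧
      {l | l ∈ lineL2 F ∧ P ≤ l} = ∅ ∧
      {l | l ∈ lineL3 F ∧ P ≤ l} = ∅ ∧
      {l | l ∈ lineL1' F ∧ P ≤ l} = ∅ ∧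
      {l | l ∈ lineL2' F ∧ P ≤ l} = ∅ := by
  intro P hP hPπ _ hE
  obtain ⟨w, hw3, rfl⟩ := exists_eq_span_add_e4 hP hPπ
  rw [pointU4_sup_span_singleton, span_add_e4_e4_inf_planePi hw3] at hE
  have : NeZero (2 : F) := ⟨two_ne_zero_of_odd_card (hq ▸ hodd)⟩
  refine ⟨by rw [lineL3'_through_eq_singleton hw3 hE, Set.ncard_singleton],
    ncard_lineL4'_through hq hw3 hE, ncard_lineL4_through hq hw3 hE, ?_, ?_, ?_,
    lineL1'_through_eq_empty hw3 hE, lineL2'_through_eq_empty hw3 hE⟩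
  all_goals exact setOf_mem_and_le_eq_empty (fun l hl => hl.2.1) hPπ
end
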